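/- arXiv:math/9901107 — 3 statements merged into one kernel-verified Lean document; each statement's English description precedes it below -/
import Mathlib

section
/- Let X = |P_1,…,P_{n+1}| be an n-dimensional simplex whose vertices P_1,…,P_{n+1} lie in general position in (ℝ_{≥0})^n. If ℝ^I and ℝ^J are both full-supporting coordinate subspaces for X, then ℝ^{I∩J} is also a full-supporting coordinate subspace for X. Consequently, there exists a unique minimal full-supporting coordinate subspace ℝ^{I_0} for X (i.e., ℝ^{I_0} is full-supporting and I_0 ⊆ I for every full-supporting ℝ^I). -/
open MeasureTheory

/-- The nonnegative orthant in `ℝ^n`. -/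
def orthant (n : ℕ) : Set (Fin n → ℝ) := {x | ∀ i, 0 ≤ x i}

/-- The coordinate subspace `ℝ^I = {x : x_i = 0 for i ∉ I}`. -/
def coordSub {n : ℕ} (I : Finset (Fin n)) : Set (Fin n → ℝ) := {x | ∀ i ∉ I, x i = 0}

/-- The projection `π_I` setting the coordinates indexed by `I` to zero. -/
def coordProj {n : ℕ} (I : Finset (Fin n)) (x : Fin n → ℝ) : Fin n → ℝ :=
  fun i => if i ∈ I then 0 else x i

/-- `|I|`-dimensional Lebesgue volume of `X ∩ ℝ^I` computed inside `ℝ^I`. -/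
noncomputable def coordVol {n : ℕ} (I : Finset (Fin n)) (X : Set (Fin n → ℝ)) : ℝ :=
  (volume ((fun (y : I → ℝ) => (fun i => if h : i ∈ I then y ⟨i, h⟩ else 0 : Fin n → ℝ)) ⁻¹' X)).toReal

/-- The Newton number of `X` computed relative to the coordinate set `K`
(for the ambient space `ℝ^K`); taking `K = univ` gives the usual Newton number. -/
noncomputable def newtonNumberOn {n : ℕ} (K : Finset (Fin n)) (X : Set (Fin n → ℝ)) : ℝ :=
  ∑ I ∈ K.powerset, (-1 : ℝ) ^ (K.card - I.card) * (Nat.factorial I.card : ℝ) * coordVol I X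

/-- `ℝ^I` is a full-supporting coordinate subspace for the simplex with vertices `P`:
it contains exactly `|I| + 1` of the vertices. -/
def FullSupp {n : ℕ} (P : Fin (n+1) → (Fin n → ℝ)) (I : Finset (Fin n)) : Prop :=
  Nat.card {j : Fin (n+1) // P j ∈ coordSub I} = I.card + 1

/-- A compact polyhedron: finite union of compact convex polytopes. -/
def IsCompactPolyhedron {n : ℕ} (X : Set (Fin n → ℝ)) : Prop :=
  ∃ (k : ℕ) (F : Fin k → Finset (Fin n → ℝ)),
    X = ⋃ i, convexHull ℝ (↑(F i) : Set (Fin n → ℝ))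

/-- A pure `n`-dimensional compact polyhedron in `ℝ^n`: finite union of `n`-dimensional
compact convex polytopes. -/
def IsPureCompactPolyhedron {n : ℕ} (X : Set (Fin n → ℝ)) : Prop :=
  ∃ (k : ℕ) (F : Fin k → Finset (Fin n → ℝ)),
    X = (⋃ i, convexHull ℝ (↑(F i) : Set (Fin n → ℝ))) ∧
    ∀ i, affineSpan ℝ (↑(F i) : Set (Fin n → ℝ)) = ⊤

/-- A quasi-convenient polyhedron in the nonnegative orthant. -/
def QuasiConvenient {n : ℕ} (X : Set (Fin n → ℝ)) : Prop :=
  IsCompactPolyhedron X ∧ X ⊆ orthant n ∧ (0 : Fin n → ℝ) ∈ X ∧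
  (∀ P ∈ Set.extremePoints ℝ X, ∀ i, P i ≠ 0 → 1 ≤ P i) ∧
  ∀ I : Finset (Fin n),
    Nonempty ((X ∩ coordSub I : Set (Fin n → ℝ)) ≃ₜ
      (Metric.closedBall (0 : EuclideanSpace ℝ (Fin I.card)) 1))

/-- `F^l_k(d_1,…,d_k) = Σ_{i_1+⋯+i_k=l-k} d_1^{i_1+1}⋯d_k^{i_k+1}`, where `d j`
denotes `d_j` for `1 ≤ j ≤ k`. -/
def Fpoly (k l : ℕ) (d : ℕ → ℕ) : ℕ :=
  ∑ c ∈ Finset.Nat.antidiagonalTuple k (l - k), ∏ j : Fin k, d (j.val + 1) ^ (c j + 1)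

/-- `G^l_k(d_1,…,d_k) = Σ_{i_1+⋯+i_k=l-k} d_1^{i_1}⋯d_k^{i_k}`. -/
def Gpoly (k l : ℕ) (d : ℕ → ℕ) : ℕ :=
  ∑ c ∈ Finset.Nat.antidiagonalTuple k (l - k), ∏ j : Fin k, d (j.val + 1) ^ (c j)

open Classical in
/-- The `r`-th Newton number of `(d_1,…,d_r)`-type, relative to the coordinate set `K`. -/
noncomputable def rNewtonOn {n : ℕ} (K : Finset (Fin n)) (r : ℕ) (d : ℕ → ℕ)
    (X : Set (Fin n → ℝ)) : ℝ :=
  (∑ I ∈ K.powerset.filter (fun I => r ≤ I.card),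
      (-1 : ℝ) ^ (K.card - I.card) * (Fpoly r I.card d : ℝ) *
        (Nat.factorial I.card : ℝ) * coordVol I X)
  + (if (0 : Fin n → ℝ) ∈ X then 1 else 0) * (-1 : ℝ) ^ (K.card - r + 1)

/-! The vertices of the simplex lying in `ℝ^I` are affinely independent points of an
`|I|`-dimensional space, so there are at most `|I| + 1` of them. Since `ℝ^{I ∩ J} = ℝ^I ∩ ℝ^J`
and `ℝ^I ∪ ℝ^J ⊆ ℝ^{I ∪ J}`, inclusion–exclusion for vertex counts gives
`#V(I ∩ J) ≥ #V(I) + #V(J) - #V(I ∪ J) ≥ |I ∩ J| + 1` when `I` and `J` are full-supporting.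
Full-supporting sets are thus closed under intersection, and `univ` is one, so their
intersection is the least one. -/

open Finset

lemma coordSub_subset_range_extendByZero {n : ℕ} (I : Finset (Fin n)) :
    coordSub I ⊆ LinearMap.range (Function.ExtendByZero.linearMap ℝ ((↑) : I → Fin n)) := by
  intro x hx
  refine ⟨fun i => x i, funext fun i => ?_⟩
  by_cases hi : i ∈ I
  · rw [Function.ExtendByZero.linearMap_apply]
    exact Subtype.val_injective.extend_apply (fun j : I => x j) 0 ⟨i, hi⟩
  · rw [Function.ExtendByZero.linearMap_apply, Function.extend_apply' _ _ _
      (by rintro ⟨j, rfl⟩; exact hi j.2), hx i hi, Pi.zero_apply]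

lemma coordSub_inter {n : ℕ} (I J : Finset (Fin n)) :
    coordSub (I ∩ J) = coordSub I ∩ coordSub J := by
  ext x
  simp only [coordSub, Set.mem_inter_iff, Set.mem_ofPred, mem_inter, not_and_or, or_imp,
    forall_and]

lemma coordSub_mono {n : ℕ} : Monotone (coordSub : Finset (Fin n) → Set (Fin n → ℝ)) :=
  fun _ _ hIJ _ hx i hi => hx i fun hiI => hi (hIJ hiI)

lemma AffineIndependent.card_le_finrank_succ_of_forall_mem {k V ι : Type*} [DivisionRing k]
    [AddCommGroup V] [Module k V] [FiniteDimensional k V] [Fintype ι] {p : ι → V}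
    (hp : AffineIndependent k p) {W : Submodule k V} (hW : ∀ i, p i ∈ W) :
    Fintype.card ι ≤ Module.finrank k W + 1 := by
  have hspan : vectorSpan k (Set.range p) ≤ W := by
    rw [vectorSpan_def, Submodule.span_le]
    rintro _ ⟨_, ⟨i, rfl⟩, _, ⟨j, rfl⟩, rfl⟩
    exact W.sub_mem (hW i) (hW j)
  exact hp.card_le_finrank_succ.trans (Nat.succ_le_succ (Submodule.finrank_mono hspan))

section Vertices

variable {ι : Type*} [Fintype ι] {n : ℕ}

open Classical in
noncomputable def verticesIn (p : ι → Fin n → ℝ) (I : Finset (Fin n)) : Finset ι :=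
  univ.filter fun j => p j ∈ coordSub I

lemma mem_verticesIn {p : ι → Fin n → ℝ} {I : Finset (Fin n)} {j : ι} :
    j ∈ verticesIn p I ↔ p j ∈ coordSub I := by
  simp [verticesIn]

lemma verticesIn_mono (p : ι → Fin n → ℝ) : Monotone (verticesIn p) :=
  fun _ _ hIJ _ hj => mem_verticesIn.2 (coordSub_mono hIJ (mem_verticesIn.1 hj))

lemma verticesIn_inter [DecidableEq ι] (p : ι → Fin n → ℝ) (I J : Finset (Fin n)) :
    verticesIn p (I ∩ J) = verticesIn p I ∩ verticesIn p J := by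
  ext j
  simp only [mem_inter, mem_verticesIn, coordSub_inter, Set.mem_inter_iff]

lemma card_verticesIn_le {p : ι → Fin n → ℝ} (hp : AffineIndependent ℝ p)
    (I : Finset (Fin n)) : #(verticesIn p I) ≤ #I + 1 := by
  have hind : AffineIndependent ℝ fun j : verticesIn p I => p j :=
    hp.comp_embedding (Function.Embedding.subtype _)
  have hcard := hind.card_le_finrank_succ_of_forall_mem
    (W := LinearMap.range (Function.ExtendByZero.linearMap ℝ ((↑) : I → Fin n)))
    fun j => coordSub_subset_range_extendByZero I (mem_verticesIn.1 j.2)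
  rw [Fintype.card_coe] at hcard
  refine hcard.trans (Nat.succ_le_succ ?_)
  simpa using LinearMap.finrank_range_le (Function.ExtendByZero.linearMap ℝ ((↑) : I → Fin n))

end Vertices

lemma fullSupp_iff {n : ℕ} (P : Fin (n + 1) → Fin n → ℝ) (I : Finset (Fin n)) :
    FullSupp P I ↔ #(verticesIn P I) = #I + 1 := by
  classical
  rw [FullSupp, Nat.card_eq_fintype_card, Fintype.card_subtype, verticesIn]

lemma fullSupp_univ {n : ℕ} (P : Fin (n + 1) → Fin n → ℝ) : FullSupp P univ := by
  have hall : verticesIn P univ = univ :=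
    eq_univ_of_forall fun j => mem_verticesIn.2 fun i hi => absurd (mem_univ i) hi
  rw [fullSupp_iff, hall, card_univ, card_univ, Fintype.card_fin, Fintype.card_fin]

lemma card_inter_eq_add_one_of_tight {α β : Type*} [DecidableEq α] [DecidableEq β]
    {f : Finset α → Finset β} (hmono : Monotone f) (hinter : ∀ I J, f (I ∩ J) = f I ∩ f J)
    (hbound : ∀ K, #(f K) ≤ #K + 1) {I J : Finset α}
    (hI : #(f I) = #I + 1) (hJ : #(f J) = #J + 1) : #(f (I ∩ J)) = #(I ∩ J) + 1 := by
  have hunion : #(f I ∪ f J) ≤ #(f (I ∪ J)) :=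
    card_le_card (union_subset (hmono subset_union_left) (hmono subset_union_right))
  have := card_union_add_card_inter (f I) (f J)
  have := card_union_add_card_inter I J
  have := hbound (I ∪ J)
  have := hbound (I ∩ J)
  rw [hinter] at *
  omega

lemma existsUnique_least_of_inf_closed {α : Type*} [Fintype α] [SemilatticeInf α]
    {p : α → Prop} (hinf : ∀ a b, p a → p b → p (a ⊓ b)) {a : α} (ha : p a) :
    ∃! m, p m ∧ ∀ b, p b → m ≤ b := by
  classical
  have hne : (univ.filter p).Nonempty := ⟨a, mem_filter.2 ⟨mem_univ a, ha⟩⟩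
  have hm : p ((univ.filter p).inf' hne id) :=
    inf'_mem {x | p x} (fun a ha b hb => hinf a b ha hb) _ hne id fun b hb => (mem_filter.1 hb).2
  have hle : ∀ b, p b → (univ.filter p).inf' hne id ≤ b :=
    fun b hb => inf'_le id (mem_filter.2 ⟨mem_univ b, hb⟩)
  exact ⟨_, ⟨hm, hle⟩, fun m ⟨hpm, hmle⟩ => le_antisymm (hmle _ hm) (hle m hpm)⟩

theorem stmt0_general (n : ℕ) (P : Fin (n + 1) → (Fin n → ℝ))
    (hind : AffineIndependent ℝ P) :
    (∀ I J : Finset (Fin n), FullSupp P I → FullSupp P J → FullSupp P (I ∩ J)) ∧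
    (∃! I₀ : Finset (Fin n), FullSupp P I₀ ∧ ∀ I, FullSupp P I → I₀ ⊆ I) := by
  have hinter : ∀ I J : Finset (Fin n), FullSupp P I → FullSupp P J → FullSupp P (I ∩ J) := by
    intro I J
    simp only [fullSupp_iff]
    exact card_inter_eq_add_one_of_tight (verticesIn_mono P) (verticesIn_inter P)
      (card_verticesIn_le hind)
  exact ⟨hinter, existsUnique_least_of_inf_closed hinter (fullSupp_univ P)⟩

theorem stmt0 (n : ℕ) (P : Fin (n + 1) → (Fin n → ℝ))
    (hind : AffineIndependent ℝ P) (hpos : ∀ j i, 0 ≤ P j i) :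
    (∀ I J : Finset (Fin n), FullSupp P I → FullSupp P J → FullSupp P (I ∩ J)) ∧
    (∃! I₀ : Finset (Fin n), FullSupp P I₀ ∧ ∀ I, FullSupp P I → I₀ ⊆ I) :=
  stmt0_general n P hind
end

section
/- Let X = |P_1,…,P_{n+1}| be an n-dimensional simplex with vertices in general position in (ℝ_{≥0})^n such that the origin O ∉ X, and let ℝ^I be the minimal full-supporting coordinate subspace for X. Then for every J with I ⊆ J ⊆ {1,…,n}, one has |J|! · V_{|J|}(X^J) = |I|! · V_{|I|}(X^I) · |J∖I|! · V_{|J∖I|}(π_I(X)^J), where π_I(X)^J = π_I(X) ∩ ℝ^{J∖I}. -/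
open MeasureTheory

open MeasureTheory Set Pointwise ENNReal

/-- The corner simplex `{x ≥ 0, ∑ x ≤ 1}`. -/
def corner (ι : Type*) [Fintype ι] : Set (ι → ℝ) :=
  {x | (∀ i, 0 ≤ x i) ∧ ∑ i, x i ≤ 1}

lemma isClosed_corner (ι : Type*) [Fintype ι] : IsClosed (corner ι) := by
  have h1 : IsClosed {x : ι → ℝ | ∀ i, 0 ≤ x i} := by
    have : {x : ι → ℝ | ∀ i, 0 ≤ x i} = ⋂ i, {x | 0 ≤ x i} := by ext; simp
    rw [this]
    exact isClosed_iInter fun i => isClosed_le continuous_const (continuous_apply i)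
  have h2 : IsClosed {x : ι → ℝ | ∑ i, x i ≤ 1} :=
    isClosed_le (by continuity) continuous_const
  exact h1.inter h2

lemma zero_mem_corner (ι : Type*) [Fintype ι] : (0 : ι → ℝ) ∈ corner ι := by
  constructor
  · intro i; simp
  · simp

lemma convex_corner (ι : Type*) [Fintype ι] : Convex ℝ (corner ι) := by
  intro x hx y hy a b ha hb hab
  constructor
  · intro i
    have h1 := hx.1 i; have h2 := hy.1 i
    have : 0 ≤ a * x i + b * y i := by positivity
    simpa using this
  · have h : ∑ i, (a * x i + b * y i) ≤ a * 1 + b * 1 := by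
      rw [Finset.sum_add_distrib, ← Finset.mul_sum, ← Finset.mul_sum]
      gcongr
      exacts [hx.2, hy.2]
    calc ∑ i, (a • x + b • y) i = ∑ i, (a * x i + b * y i) := by
          apply Finset.sum_congr rfl; intros; simp
      _ ≤ a * 1 + b * 1 := h
      _ = 1 := by rw [mul_one, mul_one, hab]

lemma smul_corner {ι : Type*} [Fintype ι] {t : ℝ} (ht0 : 0 ≤ t) (ht1 : t ≤ 1) :
    {y : ι → ℝ | (∀ i, 0 ≤ y i) ∧ ∑ i, y i ≤ 1 - t} = (1 - t) • corner ι := by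
  ext y
  constructor
  · rintro ⟨hy0, hy1⟩
    rcases eq_or_lt_of_le ht1 with h1 | h1
    · have hy : y = 0 := by
        funext i
        have hle : y i ≤ ∑ j, y j := Finset.single_le_sum (fun j _ => hy0 j) (Finset.mem_univ i)
        have : y i ≤ 0 := le_trans hle (by simpa [← h1] using hy1)
        exact le_antisymm this (hy0 i)
      rw [hy, ← h1]
      refine ⟨0, zero_mem_corner ι, by simp⟩
    · have hpos : (0 : ℝ) < 1 - t := by linarith
      refine ⟨(1 - t)⁻¹ • y, ⟨?_, ?_⟩, ?_⟩
      · intro i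
        have := hy0 i
        simpa using mul_nonneg (le_of_lt (inv_pos.2 hpos)) this
      · have : ∑ i, (1 - t)⁻¹ * y i = (1 - t)⁻¹ * ∑ i, y i := by
          rw [Finset.mul_sum]
        calc ∑ i, ((1 - t)⁻¹ • y) i = (1 - t)⁻¹ * ∑ i, y i := by
              simpa [Pi.smul_apply, smul_eq_mul] using this
          _ ≤ (1 - t)⁻¹ * (1 - t) :=
              mul_le_mul_of_nonneg_left hy1 (le_of_lt (inv_pos.2 hpos))
          _ = 1 := inv_mul_cancel₀ (ne_of_gt hpos)
      · show (1 - t) • ((1 - t)⁻¹ • y) = y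
        rw [smul_smul, mul_inv_cancel₀ (ne_of_gt hpos), one_smul]
  · rintro ⟨z, hz, rfl⟩
    constructor
    · intro i
      have := hz.1 i
      have h1t : (0:ℝ) ≤ 1 - t := by linarith
      simpa using mul_nonneg h1t this
    · have : ∑ i, (1 - t) * z i = (1 - t) * ∑ i, z i := by rw [Finset.mul_sum]
      calc ∑ i, ((1 - t) • z) i = (1 - t) * ∑ i, z i := by
            simpa [Pi.smul_apply, smul_eq_mul] using this
        _ ≤ (1 - t) * 1 :=
            mul_le_mul_of_nonneg_left hz.2 (by linarith)
        _ = 1 - t := mul_one _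

lemma volume_corner_fin (m : ℕ) :
    volume (corner (Fin m)) = ((m.factorial : ℝ≥0∞))⁻¹ := by
  induction m with
  | zero =>
      have h : corner (Fin 0) = univ := by
        ext x; simp [corner]
      rw [h]
      simp [volume_pi, Measure.pi_univ]
  | succ m ih =>
      have mp := volume_preserving_piFinSuccAbove (fun _ : Fin (m + 1) => ℝ) 0
      set ψ := MeasurableEquiv.piFinSuccAbove (fun _ : Fin (m+1) => ℝ) 0 with hψ
      have hmeas : MeasurableSet (corner (Fin (m+1))) := (isClosed_corner _).measurableSet
      have himg : ((volume : Measure ℝ).prod (volume : Measure (Fin m → ℝ)))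
              (ψ.symm ⁻¹' corner (Fin (m+1))) = volume (corner (Fin (m+1))) :=
        (MeasurePreserving.symm ψ mp).measure_preimage hmeas.nullMeasurableSet
      have hpre : ψ.symm ⁻¹' corner (Fin (m+1)) =
          {p : ℝ × (Fin m → ℝ) | (0 ≤ p.1 ∧ ∀ i, 0 ≤ p.2 i) ∧ p.1 + ∑ i, p.2 i ≤ 1} := by
        ext ⟨t, y⟩
        have hsymm : ψ.symm (t, y) = Fin.cons t y := by
          show (Fin.insertNthEquiv (fun _ : Fin (m+1) => ℝ) 0) (t, y) = Fin.cons t y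
          simp [Fin.insertNthEquiv, Fin.insertNth_zero']
        simp only [mem_preimage, hsymm, corner, mem_setOf_eq]
        rw [Fin.forall_fin_succ, Fin.sum_univ_succ]
        simp
      rw [← himg, hpre]
      have hpremeas : MeasurableSet
          {p : ℝ × (Fin m → ℝ) | (0 ≤ p.1 ∧ ∀ i, 0 ≤ p.2 i) ∧ p.1 + ∑ i, p.2 i ≤ 1} := by
        have hEq : {p : ℝ × (Fin m → ℝ) | (0 ≤ p.1 ∧ ∀ i, 0 ≤ p.2 i) ∧ p.1 + ∑ i, p.2 i ≤ 1}
            = ({p : ℝ × (Fin m → ℝ) | 0 ≤ p.1} ∩ ⋂ i, {p : ℝ × (Fin m → ℝ) | 0 ≤ p.2 i})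
              ∩ {p : ℝ × (Fin m → ℝ) | p.1 + ∑ i, p.2 i ≤ 1} := by
          ext p
          simp only [mem_setOf_eq, mem_inter_iff, mem_iInter]
        rw [hEq]
        refine (IsClosed.inter (IsClosed.inter ?_ ?_) ?_).measurableSet
        · exact isClosed_le continuous_const continuous_fst
        · exact isClosed_iInter fun i =>
            isClosed_le continuous_const ((continuous_apply i).comp continuous_snd)
        · exact isClosed_le (continuous_fst.add (continuous_finset_sum _
            fun i _ => (continuous_apply i).comp continuous_snd)) continuous_const
      rw [Measure.prod_apply hpremeas]
      have hslice : ∀ t : ℝ,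
          (volume : Measure (Fin m → ℝ)) (Prod.mk t ⁻¹' {p : ℝ × (Fin m → ℝ) |
              (0 ≤ p.1 ∧ ∀ i, 0 ≤ p.2 i) ∧ p.1 + ∑ i, p.2 i ≤ 1}) =
            (Icc (0:ℝ) 1).indicator
              (fun t => ENNReal.ofReal ((1 - t) ^ m) * ((m.factorial : ℝ≥0∞))⁻¹) t := by
        intro t
        by_cases ht : t ∈ Icc (0:ℝ) 1
        · have hset : Prod.mk t ⁻¹' {p : ℝ × (Fin m → ℝ) |
              (0 ≤ p.1 ∧ ∀ i, 0 ≤ p.2 i) ∧ p.1 + ∑ i, p.2 i ≤ 1}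
              = (1 - t) • corner (Fin m) := by
            rw [← smul_corner ht.1 ht.2]
            ext y
            simp only [mem_preimage, mem_setOf_eq]
            constructor
            · rintro ⟨⟨_, hy⟩, hsum⟩; exact ⟨hy, by linarith⟩
            · rintro ⟨hy, hsum⟩; exact ⟨⟨ht.1, hy⟩, by linarith⟩
          rw [hset, Measure.addHaar_smul_of_nonneg volume (by linarith [ht.2] : (0:ℝ) ≤ 1 - t),
            ih, indicator_of_mem ht, Module.finrank_fin_fun]
        · have hset : Prod.mk t ⁻¹' {p : ℝ × (Fin m → ℝ) |
              (0 ≤ p.1 ∧ ∀ i, 0 ≤ p.2 i) ∧ p.1 + ∑ i, p.2 i ≤ 1} = ∅ := by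
            ext y
            simp only [mem_preimage, mem_setOf_eq, mem_empty_iff_false, iff_false]
            rintro ⟨⟨ht0, hy⟩, hsum⟩
            apply ht
            have : 0 ≤ ∑ i, y i := Finset.sum_nonneg fun i _ => hy i
            exact ⟨ht0, by linarith⟩
          rw [hset, measure_empty, indicator_of_notMem ht]
      rw [lintegral_congr hslice, lintegral_indicator measurableSet_Icc]
      have hmeasfun : Measurable fun t : ℝ => ENNReal.ofReal ((1 - t) ^ m) := by
        apply ENNReal.measurable_ofReal.comp
        exact ((continuous_const.sub continuous_id).pow m).measurable
      rw [lintegral_mul_const _ hmeasfun]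
      have hint : ∫⁻ t in Icc (0:ℝ) 1, ENNReal.ofReal ((1 - t) ^ m)
          = ENNReal.ofReal (1 / (m + 1)) := by
        have hInt : IntegrableOn (fun t : ℝ => (1 - t) ^ m) (Icc 0 1) volume :=
          ((continuous_const.sub continuous_id).pow m).integrableOn_Icc
        rw [← ofReal_integral_eq_lintegral_ofReal hInt ((ae_restrict_iff' measurableSet_Icc).2
          (Filter.Eventually.of_forall fun t ht =>
            pow_nonneg (by linarith [ht.2] : (0:ℝ) ≤ 1 - t) m))]
        · congr 1
          have h1 : ∫ t in Icc (0:ℝ) 1, (1 - t) ^ m = ∫ t in (0:ℝ)..1, (1 - t) ^ m := by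
            rw [intervalIntegral.integral_of_le (by norm_num : (0:ℝ) ≤ 1),
              integral_Icc_eq_integral_Ioc]
          rw [h1]
          have h2 : ∫ t in (0:ℝ)..1, (1 - t) ^ m = ∫ t in (1-1:ℝ)..(1-0:ℝ), t ^ m := by
            simpa using intervalIntegral.integral_comp_sub_left (a := (0:ℝ)) (b := 1)
              (fun t => t ^ m) 1
          rw [h2]
          norm_num [integral_pow]
      rw [hint]
      have hfac : (((m+1).factorial : ℕ) : ℝ≥0∞) = ((m+1 : ℕ) : ℝ≥0∞) * ((m.factorial : ℕ) : ℝ≥0∞) := by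
        rw [Nat.factorial_succ]
        push_cast
        ring
      rw [hfac, ENNReal.mul_inv (Or.inl (by exact_mod_cast Nat.succ_ne_zero m))
        (Or.inl (ENNReal.natCast_ne_top _))]
      congr 1
      rw [show (1 : ℝ)/((m:ℝ)+1) = (((m+1:ℕ):ℝ))⁻¹ by push_cast; ring]
      rw [ENNReal.ofReal_inv_of_pos (by positivity), ENNReal.ofReal_natCast]

open MeasureTheory Set Pointwise ENNReal Matrix

lemma volume_corner (ι : Type*) [Fintype ι] :
    volume (corner ι) = (((Fintype.card ι).factorial : ℕ) : ℝ≥0∞)⁻¹ := by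
  set m := Fintype.card ι with hm
  set e : Fin m ≃ ι := (Fintype.equivFin ι).symm with he
  have mp := volume_measurePreserving_piCongrLeft (fun _ : ι => ℝ) e
  set g := MeasurableEquiv.piCongrLeft (fun _ : ι => ℝ) e with hg
  have hmeas : MeasurableSet (corner ι) := (isClosed_corner ι).measurableSet
  have hgx : ∀ (x : Fin m → ℝ) (j : Fin m), g x (e j) = x j := fun x j =>
    MeasurableEquiv.piCongrLeft_apply_apply (β := fun _ : ι => ℝ) e x j
  have hpre : ⇑g ⁻¹' corner ι = corner (Fin m) := by
    ext x
    constructor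
    · rintro ⟨h1, h2⟩
      refine ⟨fun j => by rw [← hgx x j]; exact h1 (e j), ?_⟩
      calc ∑ j, x j = ∑ j, g x (e j) := by simp [hgx]
        _ = ∑ i, g x i := Equiv.sum_comp e _
        _ ≤ 1 := h2
    · rintro ⟨h1, h2⟩
      refine ⟨fun i => ?_, ?_⟩
      · have h := h1 (e.symm i)
        rw [← hgx x (e.symm i)] at h
        simpa using h
      · calc ∑ i, g x i = ∑ j, g x (e j) := (Equiv.sum_comp e _).symm
          _ = ∑ j, x j := by simp [hgx]
          _ ≤ 1 := h2
  calc volume (corner ι) = volume (⇑g ⁻¹' corner ι) :=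
        (mp.measure_preimage hmeas.nullMeasurableSet).symm
    _ = _ := by rw [hpre, volume_corner_fin]

lemma volume_convexHull_simplex {ι : Type*} [Fintype ι] [DecidableEq ι]
    (v0 : ι → ℝ) (v : ι → ι → ℝ) :
    volume (convexHull ℝ (insert v0 (Set.range v))) =
      ENNReal.ofReal |(Matrix.of fun i j => v i j - v0 j).det| *
        ((((Fintype.card ι).factorial : ℕ) : ℝ≥0∞))⁻¹ := by
  classical
  set M : Matrix ι ι ℝ := Matrix.of fun i j => v i j - v0 j with hM
  set L : (ι → ℝ) →ₗ[ℝ] (ι → ℝ) := Matrix.toLin' Mᵀ with hLdef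
  have hL : ∀ (y : ι → ℝ) (c : ι), L y c = ∑ i, (v i c - v0 c) * y i := by
    intro y c
    simp only [hLdef, Matrix.toLin'_apply, Matrix.mulVec, dotProduct,
      Matrix.transpose_apply, hM, Matrix.of_apply]
  have himage : convexHull ℝ (insert v0 (Set.range v)) = (fun y => v0 + L y) '' corner ι := by
    apply Set.Subset.antisymm
    · apply convexHull_min
      · intro p hp
        rw [Set.mem_insert_iff] at hp
        rcases hp with rfl | ⟨i, rfl⟩
        · exact ⟨0, zero_mem_corner ι, by simp⟩
        · refine ⟨Pi.single i 1, ⟨fun j => ?_, ?_⟩, ?_⟩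
          · rw [Pi.single_apply]
            split <;> norm_num
          · simp [Pi.single_apply, Finset.sum_ite_eq']
          · funext c
            show (v0 + L (Pi.single i 1)) c = v i c
            rw [Pi.add_apply, hL]
            simp [Pi.single_apply, mul_ite, Finset.sum_ite_eq']
      · have himg2 : (fun y => v0 + L y) '' corner ι = (fun x => v0 + x) '' (L '' corner ι) := by
          rw [Set.image_image]
        rw [himg2]
        exact ((convex_corner ι).linear_image L).translate v0
    · rintro _ ⟨y, hy, rfl⟩
      have hmem := Finset.centerMass_mem_convexHull (Finset.univ : Finset (Option ι))
        (w := fun o => o.elim (1 - ∑ j, y j) y)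
        (z := fun o => o.elim v0 v)
        (hw₀ := ?_) (hws := ?_) (hz := ?_) (s := insert v0 (Set.range v))
      · have hsum1 : ∑ o : Option ι, (fun o => o.elim (1 - ∑ j, y j) y) o = 1 := by
          rw [Fintype.sum_option]
          simp
        rw [Finset.centerMass_eq_of_sum_1 _ _ hsum1] at hmem
        convert hmem using 1
        funext c
        show (v0 + L y) c = _
        rw [Fintype.sum_option]
        simp only [Option.elim, Pi.add_apply, Pi.smul_apply, smul_eq_mul, Finset.sum_apply]
        rw [hL]
        have hexp : ∑ i, (v i c - v0 c) * y i
            = (∑ i, v i c * y i) - (∑ i, y i) * v0 c := by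
          rw [Finset.sum_mul, ← Finset.sum_sub_distrib]
          apply Finset.sum_congr rfl
          intros
          ring
        rw [hexp]
        have h2 : ∑ i : ι, y i * v i c = ∑ i, v i c * y i := by
          apply Finset.sum_congr rfl
          intros
          ring
        rw [h2]
        ring
      · intro o _
        rcases o with _ | i
        · simpa using hy.2
        · exact hy.1 i
      · rw [Fintype.sum_option]
        simp
      · intro o _
        rcases o with _ | i
        · exact Set.mem_insert _ _
        · exact Set.mem_insert_of_mem _ ⟨i, rfl⟩
  rw [himage]
  have hvadd : (fun y => v0 + L y) '' corner ι = v0 +ᵥ (L '' corner ι) := by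
    rw [← Set.image_vadd, Set.image_image]
    rfl
  rw [hvadd, measure_vadd, Measure.addHaar_image_linearMap volume L,
    show LinearMap.det L = Mᵀ.det from LinearMap.det_toLin' Mᵀ, Matrix.det_transpose,
    volume_corner]

lemma volume_convexHull_card_le {ι : Type*} [Fintype ι] (s : Finset (ι → ℝ))
    (hcard : s.card ≤ Fintype.card ι) : volume (convexHull ℝ (s : Set (ι → ℝ))) = 0 := by
  rcases s.eq_empty_or_nonempty with rfl | hne
  · simp
  · have hone : 1 ≤ s.card := Finset.card_pos.2 hne
    have htop : affineSpan ℝ (s : Set (ι → ℝ)) ≠ ⊤ := by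
      intro h
      have hdir : vectorSpan ℝ (s : Set (ι → ℝ)) = ⊤ := by
        rw [← direction_affineSpan, h]
        exact AffineSubspace.direction_top ℝ _ _
      have hrank : Module.finrank ℝ (vectorSpan ℝ (s : Set (ι → ℝ))) ≤ s.card - 1 := by
        have hcards : Fintype.card ↥s = (s.card - 1) + 1 := by
          rw [Fintype.card_coe]; omega
        have := finrank_vectorSpan_range_le ℝ (fun j : ↥s => (j : ι → ℝ)) hcards
        have hr : Set.range (fun j : ↥s => (j : ι → ℝ)) = (s : Set (ι → ℝ)) := by
          rw [Subtype.range_coe_subtype]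
          ext x
          simp
        rwa [hr] at this
      rw [hdir] at hrank
      have h2 : Module.finrank ℝ (⊤ : Submodule ℝ (ι → ℝ)) = Fintype.card ι := by
        rw [finrank_top, Module.finrank_pi]
      omega
    exact measure_mono_null (convexHull_subset_affineSpan _)
      (MeasureTheory.Measure.addHaar_affineSubspace volume _ htop)

/-- The coordinate embedding, as a linear map. -/
noncomputable def emb {n : ℕ} (K : Finset (Fin n)) : (↥K → ℝ) →ₗ[ℝ] (Fin n → ℝ) where
  toFun y := fun i => if h : i ∈ K then y ⟨i, h⟩ else 0
  map_add' := by intro a b; funext i; by_cases h : i ∈ K <;> simp [h]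
  map_smul' := by intro c a; funext i; by_cases h : i ∈ K <;> simp [h]

/-- Restriction of coordinates, as a linear map. -/
noncomputable def res {n : ℕ} (K : Finset (Fin n)) : (Fin n → ℝ) →ₗ[ℝ] (↥K → ℝ) where
  toFun x := fun i => x ↑i
  map_add' := by intros; rfl
  map_smul' := by intros; rfl

lemma emb_apply {n : ℕ} (K : Finset (Fin n)) (y : ↥K → ℝ) (i : Fin n) :
    emb K y i = if h : i ∈ K then y ⟨i, h⟩ else 0 := rfl

lemma res_apply {n : ℕ} (K : Finset (Fin n)) (x : Fin n → ℝ) (i : ↥K) :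
    res K x i = x ↑i := rfl

lemma res_emb {n : ℕ} (K : Finset (Fin n)) (y : ↥K → ℝ) : res K (emb K y) = y := by
  funext i
  rw [res_apply, emb_apply]
  simp

lemma emb_mem_coordSub {n : ℕ} (K : Finset (Fin n)) (y : ↥K → ℝ) : emb K y ∈ coordSub K := by
  intro i hi
  rw [emb_apply]
  simp [hi]

lemma emb_res {n : ℕ} (K : Finset (Fin n)) (x : Fin n → ℝ) (hx : x ∈ coordSub K) :
    emb K (res K x) = x := by
  funext i
  rw [emb_apply]
  by_cases h : i ∈ K
  · simp [h, res_apply]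
  · simp [h, hx i h]

lemma coordVol_eq {n : ℕ} (K : Finset (Fin n)) (X : Set (Fin n → ℝ)) :
    coordVol K X = (volume (⇑(emb K) ⁻¹' X)).toReal := rfl

lemma emb_preimage_inter {n : ℕ} (K : Finset (Fin n)) (X : Set (Fin n → ℝ)) :
    ⇑(emb K) ⁻¹' X = ⇑(emb K) ⁻¹' (X ∩ coordSub K) := by
  ext y
  simp [Set.mem_preimage, emb_mem_coordSub]

lemma convex_coordSub {n : ℕ} (K : Finset (Fin n)) : Convex ℝ (coordSub K) := by
  intro x hx y hy a b _ _ _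
  intro i hi
  have h1 := hx i hi
  have h2 := hy i hi
  simp [h1, h2]

lemma emb_preimage_convexHull {n : ℕ} (K : Finset (Fin n)) (V : Set (Fin n → ℝ))
    (hV : V ⊆ coordSub K) :
    ⇑(emb K) ⁻¹' (convexHull ℝ V) = convexHull ℝ (⇑(res K) '' V) := by
  apply Set.Subset.antisymm
  · intro y hy
    have h1 : res K (emb K y) ∈ ⇑(res K) '' (convexHull ℝ V) := ⟨_, hy, rfl⟩
    rw [LinearMap.image_convexHull] at h1
    rwa [res_emb] at h1
  · intro y hy
    have h1 : emb K y ∈ ⇑(emb K) '' (convexHull ℝ (⇑(res K) '' V)) := ⟨_, hy, rfl⟩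
    rw [LinearMap.image_convexHull, ← Set.image_comp] at h1
    have h2 : (⇑(emb K) ∘ ⇑(res K)) '' V = V := by
      have heq : Set.EqOn (⇑(emb K) ∘ ⇑(res K)) id V := fun x hx => emb_res K x (hV hx)
      rw [Set.image_congr heq, Set.image_id]
    rw [h2] at h1
    exact h1

/-- Intersecting the hull of a nonnegative family with a coordinate subspace picks out
the hull of the vertices lying in that subspace. -/
lemma convexHull_inter_coordSub {n : ℕ} {ι : Type*} [Fintype ι] (v : ι → (Fin n → ℝ))
    (hv : ∀ j i, 0 ≤ v j i) (K : Finset (Fin n)) :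
    convexHull ℝ (Set.range v) ∩ coordSub K
      = convexHull ℝ (v '' {j | v j ∈ coordSub K}) := by
  classical
  apply Set.Subset.antisymm
  · rintro x ⟨hx, hxK⟩
    rw [convexHull_range_eq_exists_affineCombination] at hx
    obtain ⟨s, w, hw0, hw1, rfl⟩ := hx
    rw [Finset.affineCombination_eq_linear_combination _ _ _ hw1] at hxK ⊢
    have hzero : ∀ j ∈ s, w j ≠ 0 → v j ∈ coordSub K := by
      intro j hj hwj i hi
      have hxi : (∑ j ∈ s, w j • v j) i = 0 := hxK i hi
      rw [Finset.sum_apply] at hxi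
      have hterm : ∀ j ∈ s, 0 ≤ (w j • v j) i := fun j hj => by
        simpa using mul_nonneg (hw0 j hj) (hv j i)
      have := (Finset.sum_eq_zero_iff_of_nonneg hterm).1 hxi j hj
      simp only [Pi.smul_apply, smul_eq_mul, mul_eq_zero] at this
      tauto
    set s' := s.filter (fun j => v j ∈ coordSub K) with hs'
    have hsum' : ∑ j ∈ s', w j = 1 := by
      rw [hs', Finset.sum_filter_of_ne hzero, hw1]
    have hvec : ∑ j ∈ s', w j • v j = ∑ j ∈ s, w j • v j := by
      rw [hs']
      apply Finset.sum_filter_of_ne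
      intro j hj hne
      apply hzero j hj
      intro hw
      apply hne
      rw [hw, zero_smul]
    rw [← hvec]
    have hmem := Finset.centerMass_mem_convexHull s'
      (fun j hj => hw0 j (Finset.mem_of_mem_filter j hj))
      (by rw [hsum']; norm_num)
      (fun j hj => (Set.mem_image _ _ _).2 ⟨j, (Finset.mem_filter.1 hj).2, rfl⟩)
      (z := v) (s := v '' {j | v j ∈ coordSub K})
    rwa [Finset.centerMass_eq_of_sum_1 _ _ hsum'] at hmem
  · apply Set.subset_inter
    · exact convexHull_mono (Set.image_subset_range _ _)
    · apply convexHull_min _ (convex_coordSub K)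
      rintro _ ⟨j, hj, rfl⟩
      exact hj

/-- The equivalence `↥I ⊕ ↥(J \ I) ≃ ↥J` for `I ⊆ J`. -/
def sdiffSumEquiv {α : Type*} [DecidableEq α] {I J : Finset α} (h : I ⊆ J) :
    (↥I ⊕ ↥(J \ I)) ≃ ↥J where
  toFun := Sum.elim (fun a => ⟨↑a, h a.2⟩) (fun b => ⟨↑b, (Finset.mem_sdiff.1 b.2).1⟩)
  invFun j := if hj : ↑j ∈ I then Sum.inl ⟨↑j, hj⟩
    else Sum.inr ⟨↑j, Finset.mem_sdiff.2 ⟨j.2, hj⟩⟩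
  left_inv := by
    rintro (a | b)
    · simp [a.2]
    · have hb : ↑b ∉ I := (Finset.mem_sdiff.1 b.2).2
      simp [hb]
  right_inv := by
    intro j
    by_cases hj : ↑j ∈ I <;> simp [hj]

@[simp] lemma sdiffSumEquiv_inl_coe {α : Type*} [DecidableEq α] {I J : Finset α} (h : I ⊆ J)
    (a : ↥I) : (↑(sdiffSumEquiv h (Sum.inl a)) : α) = ↑a := rfl

@[simp] lemma sdiffSumEquiv_inr_coe {α : Type*} [DecidableEq α] {I J : Finset α} (h : I ⊆ J)
    (b : ↥(J \ I)) : (↑(sdiffSumEquiv h (Sum.inr b)) : α) = ↑b := rfl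

lemma range_equiv_coe {α γ : Type*} {t : Finset α} (e : γ ≃ ↥t) :
    Set.range (fun a => (↑(e a) : α)) = ↑t := by
  ext x
  constructor
  · rintro ⟨a, rfl⟩
    exact (e a).2
  · intro hx
    exact ⟨e.symm ⟨x, hx⟩, by simp⟩

lemma fact_mul_toReal (d : ℕ) (x : ℝ) (hx : 0 ≤ x) :
    (d.factorial : ℝ) * (ENNReal.ofReal x * (((d.factorial : ℕ)) : ℝ≥0∞)⁻¹).toReal = x := by
  rw [ENNReal.toReal_mul, ENNReal.toReal_ofReal hx, ENNReal.toReal_inv, ENNReal.toReal_natCast]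
  have hd : (d.factorial : ℝ) ≠ 0 := Nat.cast_ne_zero.2 (Nat.factorial_ne_zero d)
  field_simp

lemma emb_injective {n : ℕ} (K : Finset (Fin n)) : Function.Injective (emb K) := by
  have h : Function.LeftInverse (res K) (emb K) := res_emb K
  exact h.injective

lemma coordSub_eq_range {n : ℕ} (K : Finset (Fin n)) :
    coordSub K = ↑(LinearMap.range (emb K)) := by
  ext x
  constructor
  · intro hx
    exact ⟨res K x, emb_res K x hx⟩
  · rintro ⟨y, rfl⟩
    exact emb_mem_coordSub K y

lemma finrank_range_emb {n : ℕ} (K : Finset (Fin n)) :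
    Module.finrank ℝ (LinearMap.range (emb K)) = K.card := by
  rw [LinearMap.finrank_range_of_inj (emb_injective K), Module.finrank_pi, Fintype.card_coe]

/-- At most `K.card + 1` of the affinely independent points can lie in `ℝ^K`. -/
lemma filter_coordSub_card_le {n : ℕ} (P : Fin (n + 1) → (Fin n → ℝ))
    (hind : AffineIndependent ℝ P) (K : Finset (Fin n)) [DecidablePred (fun j => P j ∈ coordSub K)] :
    (Finset.univ.filter (fun j => P j ∈ coordSub K)).card ≤ K.card + 1 := by
  by_contra hlt
  push_neg at hlt
  set T := Finset.univ.filter (fun j => P j ∈ coordSub K) with hT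
  have hsub : AffineIndependent ℝ (fun j : ↥T => P ↑j) :=
    hind.comp_embedding (Function.Embedding.subtype _)
  have hcards : Fintype.card ↥T = (T.card - 1) + 1 := by
    rw [Fintype.card_coe]; omega
  have hrank := hsub.finrank_vectorSpan hcards
  have hle : vectorSpan ℝ (Set.range fun j : ↥T => P ↑j) ≤ LinearMap.range (emb K) := by
    rw [vectorSpan_def, Submodule.span_le]
    rintro _ ⟨x, hx, y, hy, rfl⟩
    obtain ⟨jx, rfl⟩ := hx
    obtain ⟨jy, rfl⟩ := hy
    have hjx : P ↑jx ∈ coordSub K := (Finset.mem_filter.1 jx.2).2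
    have hjy : P ↑jy ∈ coordSub K := (Finset.mem_filter.1 jy.2).2
    rw [coordSub_eq_range] at hjx hjy
    exact Submodule.sub_mem _ hjx hjy
  have hfr := Submodule.finrank_mono hle
  rw [hrank, finrank_range_emb] at hfr
  omega

theorem stmt2 (n : ℕ) (P : Fin (n + 1) → (Fin n → ℝ))
    (hind : AffineIndependent ℝ P) (hpos : ∀ j i, 0 ≤ P j i)
    (X : Set (Fin n → ℝ)) (hX : X = convexHull ℝ (Set.range P))
    (hO : (0 : Fin n → ℝ) ∉ X)
    (I : Finset (Fin n)) (hFS : FullSupp P I)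
    (hmin : ∀ J, FullSupp P J → I ⊆ J) :
    ∀ J : Finset (Fin n), I ⊆ J →
      (Nat.factorial J.card : ℝ) * coordVol J X =
        (Nat.factorial I.card : ℝ) * coordVol I X *
          ((Nat.factorial (J \ I).card : ℝ) * coordVol (J \ I) (coordProj I '' X)) := by
  intro J hIJ
  classical
  subst hX
  set k := I.card with hk
  set m := (J \ I).card with hm
  have hJcard : J.card = k + m := by
    have h := Finset.card_sdiff_add_card_eq_card hIJ
    omega
  set TI : Finset (Fin (n+1)) := Finset.univ.filter (fun j => P j ∈ coordSub I) with hTI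
  set TJ : Finset (Fin (n+1)) := Finset.univ.filter (fun j => P j ∈ coordSub J) with hTJ
  have hsubIJ : coordSub I ⊆ coordSub J := by
    intro x hx i hi
    exact hx i (fun hiI => hi (hIJ hiI))
  have hTIJ : TI ⊆ TJ := by
    intro j hj
    rw [hTI, Finset.mem_filter] at hj
    rw [hTJ, Finset.mem_filter]
    exact ⟨hj.1, hsubIJ hj.2⟩
  have hTIcard : TI.card = k + 1 := by
    have h := hFS
    rw [FullSupp, Nat.card_eq_fintype_card, Fintype.card_subtype] at h
    rw [hTI]
    convert h using 2
  have hTJcard_le : TJ.card ≤ J.card + 1 := by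
    rw [hTJ]
    convert filter_coordSub_card_le P hind J using 2
  -- the projected family
  set Q : Fin (n+1) → (Fin n → ℝ) := fun j => coordProj I (P j) with hQ
  have hQpos : ∀ j i, 0 ≤ Q j i := by
    intro j i
    rw [hQ]
    by_cases h : i ∈ I <;> simp [coordProj, h, hpos j i]
  have hQmem : ∀ j, Q j ∈ coordSub (J \ I) ↔ P j ∈ coordSub J := by
    intro j
    constructor
    · intro h i hi
      have hiI : i ∉ I := fun hiI => hi (hIJ hiI)
      have hiJI : i ∉ J \ I := fun hmem => hi (Finset.mem_sdiff.1 hmem).1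
      have := h i hiJI
      simpa [hQ, coordProj, hiI] using this
    · intro h i hi
      by_cases hiI : i ∈ I
      · simp [hQ, coordProj, hiI]
      · have hiJ : i ∉ J := by
          intro hiJ
          exact hi (Finset.mem_sdiff.2 ⟨hiJ, hiI⟩)
        simpa [hQ, coordProj, hiI] using h i hiJ
  -- linearity of the projection
  have hlin : IsLinearMap ℝ (coordProj I) := by
    constructor
    · intro x y
      funext i
      by_cases h : i ∈ I <;> simp [coordProj, h]
    · intro c x
      funext i
      by_cases h : i ∈ I <;> simp [coordProj, h]
  -- description of the three preimage sets
  have hsetJ : ⇑(emb J) ⁻¹' (convexHull ℝ (Set.range P))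
      = convexHull ℝ (⇑(res J) '' (P '' ↑TJ)) := by
    rw [emb_preimage_inter, convexHull_inter_coordSub P hpos J,
      emb_preimage_convexHull]
    · congr 2
      rw [hTJ]
      ext x
      simp
    · rintro _ ⟨j, hj, rfl⟩
      exact hj
  have hsetI : ⇑(emb I) ⁻¹' (convexHull ℝ (Set.range P))
      = convexHull ℝ (⇑(res I) '' (P '' ↑TI)) := by
    rw [emb_preimage_inter, convexHull_inter_coordSub P hpos I,
      emb_preimage_convexHull]
    · congr 2
      rw [hTI]
      ext x
      simp
    · rintro _ ⟨j, hj, rfl⟩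
      exact hj
  have hproj : coordProj I '' (convexHull ℝ (Set.range P)) = convexHull ℝ (Set.range Q) := by
    rw [hlin.image_convexHull, ← Set.range_comp]
    rfl
  have hsetD : ⇑(emb (J \ I)) ⁻¹' (coordProj I '' (convexHull ℝ (Set.range P)))
      = convexHull ℝ (⇑(res (J \ I)) '' (Q '' ↑TJ)) := by
    rw [hproj, emb_preimage_inter, convexHull_inter_coordSub Q hQpos (J \ I),
      emb_preimage_convexHull]
    · congr 2
      rw [hTJ]
      ext x
      simp [hQmem]
    · rintro _ ⟨j, hj, rfl⟩
      exact hj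
  have hQTI : ∀ j ∈ TI, Q j = 0 := by
    intro j hj
    have hjI : P j ∈ coordSub I := by
      rw [hTI, Finset.mem_filter] at hj
      exact hj.2
    funext i
    by_cases h : i ∈ I
    · simp [hQ, coordProj, h]
    · simp [hQ, coordProj, h, hjI i h]
  have hPTI : ∀ j ∈ TI, ∀ i, i ∉ I → P j i = 0 := by
    intro j hj i hi
    rw [hTI, Finset.mem_filter] at hj
    exact hj.2 i hi
  by_cases hcase : TJ.card = J.card + 1
  · -- nondegenerate case
    have hTIne : TI.Nonempty := Finset.card_pos.1 (by omega)
    obtain ⟨j0, hj0⟩ := hTIne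
    have hj0J : j0 ∈ TJ := hTIJ hj0
    have hcard1 : I.card = (TI.erase j0).card := by
      rw [Finset.card_erase_of_mem hj0]
      omega
    have hcard2 : (J \ I).card = (TJ \ TI).card := by
      rw [Finset.card_sdiff_of_subset hTIJ]
      have h4 : TI.card ≤ TJ.card := Finset.card_le_card hTIJ
      omega
    set β1 := Finset.equivOfCardEq hcard1 with hβ1
    set β2 := Finset.equivOfCardEq hcard2 with hβ2
    set ξ := sdiffSumEquiv hIJ with hξ
    set w : ↥J → Fin (n+1) :=
      fun j => Sum.elim (fun a : ↥I => (↑(β1 a) : Fin (n+1))) (fun b => ↑(β2 b)) (ξ.symm j) with hw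
    have hwl : ∀ a : ↥I, w (ξ (Sum.inl a)) = ↑(β1 a) := by
      intro a
      rw [hw]
      simp
    have hwr : ∀ b : ↥(J \ I), w (ξ (Sum.inr b)) = ↑(β2 b) := by
      intro b
      rw [hw]
      simp
    have hβ1TI : ∀ a, (↑(β1 a) : Fin (n+1)) ∈ TI := fun a => Finset.mem_of_mem_erase (β1 a).2
    have hβ2TJ : ∀ b, (↑(β2 b) : Fin (n+1)) ∈ TJ := fun b => (Finset.mem_sdiff.1 (β2 b).2).1
    -- range of w
    have hrw : Set.range w = ↑(TJ.erase j0) := by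
      have h1 : Set.range w = Set.range (Sum.elim (fun a : ↥I => (↑(β1 a) : Fin (n+1)))
          (fun b => ↑(β2 b))) := by
        rw [hw]
        apply Set.Subset.antisymm
        · rintro _ ⟨j, rfl⟩
          exact ⟨ξ.symm j, rfl⟩
        · rintro _ ⟨p, rfl⟩
          exact ⟨ξ p, by simp⟩
      rw [h1, Sum.elim_range, range_equiv_coe, range_equiv_coe]
      rw [← Finset.coe_union]
      norm_cast
      ext x
      simp only [Finset.mem_union, Finset.mem_erase, Finset.mem_sdiff]
      constructor
      · rintro (⟨hne, hTI'⟩ | ⟨hTJ', hnTI⟩)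
        · exact ⟨hne, hTIJ hTI'⟩
        · exact ⟨fun h => hnTI (h ▸ hj0), hTJ'⟩
      · rintro ⟨hne, hTJ'⟩
        by_cases hxTI : x ∈ TI
        · left
          exact ⟨hne, hxTI⟩
        · right
          exact ⟨hTJ', hxTI⟩
    -- vertex set descriptions
    have hvertJ : ⇑(res J) '' (P '' ↑TJ)
        = insert (res J (P j0)) (Set.range fun a : ↥J => res J (P (w a))) := by
      have h1 : (↑TJ : Set (Fin (n+1))) = insert j0 ↑(TJ.erase j0) := by
        rw [← Finset.coe_insert, Finset.insert_erase hj0J]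
      rw [h1, Set.image_insert_eq, Set.image_insert_eq]
      congr 1
      rw [← hrw, ← Set.range_comp, ← Set.range_comp]
      rfl
    have hvertI : ⇑(res I) '' (P '' ↑TI)
        = insert (res I (P j0)) (Set.range fun a : ↥I => res I (P ↑(β1 a))) := by
      have h1 : (↑TI : Set (Fin (n+1))) = insert j0 ↑(TI.erase j0) := by
        rw [← Finset.coe_insert, Finset.insert_erase hj0]
      rw [h1, Set.image_insert_eq, Set.image_insert_eq]
      congr 1
      rw [← range_equiv_coe β1, ← Set.range_comp, ← Set.range_comp]
      rfl
    have hvertD : ⇑(res (J \ I)) '' (Q '' ↑TJ)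
        = insert 0 (Set.range fun b : ↥(J \ I) => res (J \ I) (Q ↑(β2 b))) := by
      have h1 : (↑TJ : Set (Fin (n+1))) = ↑TI ∪ ↑(TJ \ TI) := by
        rw [← Finset.coe_union, Finset.union_sdiff_of_subset hTIJ]
      have h2 : Q '' ↑TI = {0} := by
        apply Set.Subset.antisymm
        · rintro _ ⟨j, hj, rfl⟩
          exact hQTI j hj
        · rintro _ rfl
          exact ⟨j0, hj0, hQTI j0 hj0⟩
      rw [h1, Set.image_union, Set.image_union, h2, Set.image_singleton,
        Set.singleton_union, map_zero]
      congr 1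
      rw [← range_equiv_coe β2, ← Set.range_comp, ← Set.range_comp]
      rfl
    -- matrices
    set MJ : Matrix ↥J ↥J ℝ := Matrix.of fun a b => P (w a) ↑b - P j0 ↑b with hMJ
    set MA : Matrix ↥I ↥I ℝ := Matrix.of fun a b => P ↑(β1 a) ↑b - P j0 ↑b with hMA
    set MD : Matrix ↥(J \ I) ↥(J \ I) ℝ := Matrix.of fun b c => Q ↑(β2 b) ↑c with hMD
    set MC : Matrix ↥(J \ I) ↥I ℝ := Matrix.of fun b a => P ↑(β2 b) ↑a - P j0 ↑a with hMC
    have hblock : MJ.submatrix ξ ξ = Matrix.fromBlocks MA 0 MC MD := by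
      ext ab cd
      rcases ab with a | b <;> rcases cd with a' | b' <;>
        rw [Matrix.submatrix_apply]
      · rw [Matrix.fromBlocks_apply₁₁]
        show MJ (ξ (Sum.inl a)) (ξ (Sum.inl a')) = MA a a'
        rw [hMJ, hMA, Matrix.of_apply, Matrix.of_apply, hwl, sdiffSumEquiv_inl_coe]
      · rw [Matrix.fromBlocks_apply₁₂]
        show MJ (ξ (Sum.inl a)) (ξ (Sum.inr b')) = 0
        rw [hMJ, Matrix.of_apply, hwl, sdiffSumEquiv_inr_coe]
        have hb' : (↑b' : Fin n) ∉ I := (Finset.mem_sdiff.1 b'.2).2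
        rw [hPTI _ (hβ1TI a) _ hb', hPTI _ hj0 _ hb', sub_zero]
      · rw [Matrix.fromBlocks_apply₂₁]
        show MJ (ξ (Sum.inr b)) (ξ (Sum.inl a')) = MC b a'
        rw [hMJ, hMC, Matrix.of_apply, Matrix.of_apply, hwr, sdiffSumEquiv_inl_coe]
      · rw [Matrix.fromBlocks_apply₂₂]
        show MJ (ξ (Sum.inr b)) (ξ (Sum.inr b')) = MD b b'
        rw [hMJ, hMD, Matrix.of_apply, Matrix.of_apply, hwr, sdiffSumEquiv_inr_coe]
        have hb' : (↑b' : Fin n) ∉ I := (Finset.mem_sdiff.1 b'.2).2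
        rw [hPTI _ hj0 _ hb', sub_zero, hQ]
        simp [coordProj, hb']
    have hdet : MJ.det = MA.det * MD.det := by
      rw [← Matrix.det_submatrix_equiv_self ξ MJ, hblock, Matrix.det_fromBlocks_zero₁₂]
    -- volume computations
    have hvolJ := volume_convexHull_simplex (res J (P j0)) (fun a : ↥J => res J (P (w a)))
    rw [← hvertJ] at hvolJ
    have hvolI := volume_convexHull_simplex (res I (P j0)) (fun a : ↥I => res I (P ↑(β1 a)))
    rw [← hvertI] at hvolI
    have hvolD := volume_convexHull_simplex (0 : ↥(J \ I) → ℝ)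
      (fun b : ↥(J \ I) => res (J \ I) (Q ↑(β2 b)))
    rw [← hvertD] at hvolD
    have hVJ : (J.card.factorial : ℝ) * coordVol J (convexHull ℝ (Set.range P)) = |MJ.det| := by
      rw [coordVol_eq, hsetJ, hvolJ]
      have hcards : Fintype.card ↥J = J.card := Fintype.card_coe J
      rw [hcards]
      have hMeq : (Matrix.of fun i j : ↥J =>
          (fun a : ↥J => res J (P (w a))) i j - res J (P j0) j) = MJ := rfl
      rw [hMeq]
      exact fact_mul_toReal J.card |MJ.det| (abs_nonneg _)
    have hVI : (I.card.factorial : ℝ) * coordVol I (convexHull ℝ (Set.range P)) = |MA.det| := by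
      rw [coordVol_eq, hsetI, hvolI]
      have hcards : Fintype.card ↥I = I.card := Fintype.card_coe I
      rw [hcards]
      have hMeq : (Matrix.of fun i j : ↥I =>
          (fun a : ↥I => res I (P ↑(β1 a))) i j - res I (P j0) j) = MA := rfl
      rw [hMeq]
      exact fact_mul_toReal I.card |MA.det| (abs_nonneg _)
    have hVD : ((J \ I).card.factorial : ℝ)
        * coordVol (J \ I) (coordProj I '' (convexHull ℝ (Set.range P))) = |MD.det| := by
      rw [coordVol_eq, hsetD, hvolD]
      have hcards : Fintype.card ↥(J \ I) = (J \ I).card := Fintype.card_coe (J \ I)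
      rw [hcards]
      have hMeq : (Matrix.of fun i j : ↥(J \ I) =>
          (fun b : ↥(J \ I) => res (J \ I) (Q ↑(β2 b))) i j - (0 : ↥(J \ I) → ℝ) j) = MD := by
        ext i j
        simp [hMD, res_apply, Matrix.of_apply]
      rw [hMeq]
      exact fact_mul_toReal (J \ I).card |MD.det| (abs_nonneg _)
    rw [hVJ, hVI, hVD, hdet, abs_mul]
  · -- degenerate case: everything is zero
    have hc : TJ.card ≤ J.card := by omega
    have hLHS : coordVol J (convexHull ℝ (Set.range P)) = 0 := by
      rw [coordVol_eq, hsetJ]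
      have himg : ⇑(res J) '' (P '' ↑TJ) = ↑((TJ.image P).image (res J)) := by
        simp [Finset.coe_image]
      rw [himg, volume_convexHull_card_le _ (le_trans (Finset.card_image_le.trans
        Finset.card_image_le) (by rw [Fintype.card_coe]; exact hc))]
      simp
    have hRHS : coordVol (J \ I) (coordProj I '' (convexHull ℝ (Set.range P))) = 0 := by
      rw [coordVol_eq, hsetD]
      -- the image of `TI` under `Q` is `{0}`
      have hTJsplit : TJ = TI ∪ (TJ \ TI) := by
        rw [Finset.union_sdiff_of_subset hTIJ]
      have himgQ : Q '' ↑TJ ⊆ insert 0 (Q '' ↑(TJ \ TI)) := by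
        rintro _ ⟨j, hj, rfl⟩
        by_cases hjTI : j ∈ TI
        · left
          exact hQTI j hjTI
        · right
          exact ⟨j, by
            rw [Finset.coe_sdiff]
            exact ⟨hj, hjTI⟩, rfl⟩
      have himg2 : ⇑(res (J \ I)) '' (Q '' ↑TJ)
          ⊆ ↑(insert (0 : ↥(J \ I) → ℝ) (((TJ \ TI).image Q).image (res (J \ I)))) := by
        intro x hx
        obtain ⟨y, hy, rfl⟩ := hx
        rcases himgQ hy with rfl | hy2
        · simp only [Finset.coe_insert, Set.mem_insert_iff]
          left
          exact map_zero _
        · simp only [Finset.coe_insert, Set.mem_insert_iff, Finset.coe_image]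
          right
          exact ⟨y, by simpa [Finset.coe_image] using hy2, rfl⟩
      have hcard2 : (insert (0 : ↥(J \ I) → ℝ) (((TJ \ TI).image Q).image (res (J \ I)))).card
          ≤ Fintype.card ↥(J \ I) := by
        rw [Fintype.card_coe]
        calc _ ≤ (((TJ \ TI).image Q).image (res (J \ I))).card + 1 := Finset.card_insert_le _ _
          _ ≤ (TJ \ TI).card + 1 := by
              have := Finset.card_image_le (s := (TJ \ TI).image Q) (f := ⇑(res (J \ I)))
              have := Finset.card_image_le (s := TJ \ TI) (f := Q)
              omega
          _ ≤ m := by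
              have hsd : (TJ \ TI).card = TJ.card - TI.card := Finset.card_sdiff_of_subset hTIJ
              have h4 : TI.card ≤ TJ.card := Finset.card_le_card hTIJ
              omega
          _ ≤ _ := le_rfl
      have hz := volume_convexHull_card_le _ hcard2
      rw [ENNReal.toReal_eq_zero_iff]
      left
      exact measure_mono_null (convexHull_mono himg2) hz
    rw [hLHS, hRHS]
    ring
end

section
/- Let a_1,…,a_n ≥ 1 be real numbers and let Y = |O, A_1,…,A_n| be the n-dimensional simplex with vertices the origin O and A_i = a_i·e_i (where e_i is the i-th standard basis vector), i = 1,…,n. Then ν(Y) = (a_1 − 1)·(a_2 − 1)·…·(a_n − 1). In particular, for Y_a = {x ∈ (ℝ_{≥0})^n : x_1 + … + x_n ≤ a} one has ν(Y_a) = (a − 1)^n. -/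
open MeasureTheory

/-!
The simplex `|O, a₁e₁, …, aₙeₙ|` is the preimage of the corner simplex
`{x ≥ 0 | ∑ xᵢ ≤ 1}` under the diagonal map `x ↦ (xᵢ / aᵢ)ᵢ`, and each coordinate section of it
is a simplex of the same shape. Slicing off one coordinate and integrating gives
`vol {x ∈ ℝ^m | x ≥ 0, ∑ xᵢ ≤ t} = t^m / m!`, so `|I|! V_{|I|}(Y^I) = ∏_{i ∈ I} aᵢ`, and the
alternating sum defining `ν(Y)` is then the expansion of `∏ᵢ (aᵢ - 1)`.
-/

open Finset Nat

def cornerSimplex (ι : Type*) [Fintype ι] (t : ℝ) : Set (ι → ℝ) :=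
  {x | (∀ i, 0 ≤ x i) ∧ ∑ i, x i ≤ t}

section CornerSimplex

variable {ι : Type*} [Fintype ι]

lemma isClosed_cornerSimplex (t : ℝ) : IsClosed (cornerSimplex ι t) :=
  isClosed_Ici.inter
    (isClosed_le (continuous_finsetSum _ fun i _ => continuous_apply i) continuous_const)

lemma convex_cornerSimplex (t : ℝ) : Convex ℝ (cornerSimplex ι t) :=
  convex_Ici 0 |>.inter <| convex_halfSpace_le
    ⟨fun _ _ => sum_add_distrib, fun _ _ => (mul_sum _ _ _).symm⟩ t

lemma cornerSimplex_eq_empty {t : ℝ} (ht : t < 0) : cornerSimplex ι t = ∅ :=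
  Set.eq_empty_of_forall_notMem fun _ ⟨hx, hsum⟩ =>
    (sum_nonneg fun i _ => hx i).not_gt (hsum.trans_lt ht)

lemma cons_mem_cornerSimplex_iff {m : ℕ} {t x : ℝ} {y : Fin m → ℝ} :
    (Fin.cons x y : Fin (m + 1) → ℝ) ∈ cornerSimplex (Fin (m + 1)) t ↔
      0 ≤ x ∧ y ∈ cornerSimplex (Fin m) (t - x) := by
  simp only [cornerSimplex, Set.mem_ofPred_eq, Fin.forall_fin_succ, Fin.sum_univ_succ,
    Fin.cons_zero, Fin.cons_succ, le_sub_iff_add_le', and_assoc]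

lemma preimage_piCongrLeft_cornerSimplex {κ : Type*} [Fintype κ] (e : κ ≃ ι) (t : ℝ) :
    MeasurableEquiv.piCongrLeft (fun _ => ℝ) e ⁻¹' cornerSimplex ι t = cornerSimplex κ t := by
  ext y
  simp only [Set.mem_preimage, cornerSimplex, Set.mem_ofPred_eq]
  rw [← e.forall_congr_right, ← e.sum_comp]
  simp only [MeasurableEquiv.piCongrLeft_apply_apply]

end CornerSimplex

lemma integral_sub_pow (t : ℝ) (m : ℕ) :
    ∫ x in (0 : ℝ)..t, (t - x) ^ m = t ^ (m + 1) / (m + 1) := by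
  simp [intervalIntegral.integral_comp_sub_left (fun x => x ^ m)]

lemma volume_cornerSimplex_fin (m : ℕ) {t : ℝ} (ht : 0 ≤ t) :
    volume (cornerSimplex (Fin m) t) = ENNReal.ofReal (t ^ m / m !) := by
  induction m generalizing t with
  | zero => simp [cornerSimplex, ht, volume_pi]
  | succ m ih =>
    have hslice : ∀ x, volume {y | (Fin.cons x y : Fin (m + 1) → ℝ) ∈ cornerSimplex _ t} =
        (Set.Icc 0 t).indicator (fun x => ENNReal.ofReal ((t - x) ^ m / m !)) x := by
      intro x
      simp only [cons_mem_cornerSimplex_iff, Set.ofPred_and, Set.ofPred_mem_eq]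
      by_cases hx : x ∈ Set.Icc 0 t
      · rw [Set.indicator_of_mem hx, ← ih (sub_nonneg.2 hx.2)]
        simp [hx.1]
      · rw [Set.indicator_of_notMem hx]
        rcases not_and_or.1 hx with hx | hx
        · simp [hx]
        · simp [cornerSimplex_eq_empty (sub_neg.2 (not_le.1 hx))]
    have hmeas := (isClosed_cornerSimplex (ι := Fin (m + 1)) t).measurableSet
    have e := (volume_preserving_piFinSuccAbove (fun _ : Fin (m + 1) => ℝ) 0).symm
    rw [← e.measure_preimage hmeas.nullMeasurableSet, Measure.volume_eq_prod,
      Measure.prod_apply (e.measurable hmeas)]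
    simp only [MeasurableEquiv.piFinSuccAbove_symm_apply, Fin.insertNthEquiv_zero]
    have hpre : ∀ x, Prod.mk x ⁻¹' (⇑(Fin.consEquiv fun _ => ℝ) ⁻¹' cornerSimplex _ t) =
        {y | Fin.cons x y ∈ cornerSimplex (Fin (m + 1)) t} := fun x => rfl
    simp only [hpre, hslice]
    rw [lintegral_indicator measurableSet_Icc, ← ofReal_integral_eq_lintegral_ofReal,
      integral_Icc_eq_integral_Ioc, ← intervalIntegral.integral_of_le ht,
      intervalIntegral.integral_div, integral_sub_pow]
    · rw [Nat.factorial_succ, Nat.cast_mul, Nat.cast_succ, div_div]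
    · exact Continuous.integrableOn_Icc (by fun_prop)
    · filter_upwards [ae_restrict_mem measurableSet_Icc] with x hx
      have := sub_nonneg.2 hx.2
      positivity

lemma volume_cornerSimplex (ι : Type*) [Fintype ι] {t : ℝ} (ht : 0 ≤ t) :
    volume (cornerSimplex ι t) = ENNReal.ofReal (t ^ Fintype.card ι / (Fintype.card ι) !) := by
  have e := volume_measurePreserving_piCongrLeft (fun _ : ι => ℝ) (Fintype.equivFin ι).symm
  rw [← e.measure_preimage (isClosed_cornerSimplex t).measurableSet.nullMeasurableSet,
    preimage_piCongrLeft_cornerSimplex, volume_cornerSimplex_fin _ ht]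

lemma volume_preimage_div {ι : Type*} [Fintype ι] {d : ι → ℝ} (hd : ∀ i, d i ≠ 0)
    (s : Set (ι → ℝ)) :
    volume ((fun (x : ι → ℝ) i => x i / d i) ⁻¹' s) = ENNReal.ofReal (∏ i, |d i|) * volume s := by
  classical
  have hmap : (fun (x : ι → ℝ) i => x i / d i) =
      Matrix.toLin' (Matrix.diagonal fun i => (d i)⁻¹) := by
    ext x i
    simp [Matrix.mulVec_diagonal, div_eq_inv_mul]
  have hdet : LinearMap.det (Matrix.toLin' (Matrix.diagonal fun i => (d i)⁻¹)) = ∏ i, (d i)⁻¹ := by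
    rw [LinearMap.det_toLin', Matrix.det_diagonal]
  rw [hmap, Measure.addHaar_preimage_linearMap _ (by simp [hdet, prod_ne_zero_iff, hd]), hdet]
  simp [abs_prod]

section ExtendByZero

variable {n : ℕ} (I : Finset (Fin n))

def extendByZero (y : I → ℝ) : Fin n → ℝ :=
  fun i => if h : i ∈ I then y ⟨i, h⟩ else 0

lemma coordVol_eq_volume_preimage_extendByZero (X : Set (Fin n → ℝ)) :
    coordVol I X = (volume (extendByZero I ⁻¹' X)).toReal :=
  rfl

lemma sum_extendByZero (y : I → ℝ) : ∑ i, extendByZero I y i = ∑ j, y j := by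
  rw [← sum_subset (f := extendByZero I y) (subset_univ I) fun i _ hi => dif_neg hi,
    ← sum_coe_sort I]
  simp [extendByZero]

lemma extendByZero_nonneg_iff {y : I → ℝ} : 0 ≤ extendByZero I y ↔ 0 ≤ y := by
  refine ⟨fun h j => by simpa [extendByZero] using h j, fun h i => ?_⟩
  unfold extendByZero
  split_ifs
  exacts [h _, le_rfl]

lemma extendByZero_div (y : I → ℝ) (d : Fin n → ℝ) :
    (fun i => extendByZero I y i / d i) = extendByZero I (fun j => y j / d j) := by
  ext i
  by_cases h : i ∈ I <;> simp [extendByZero, h]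

lemma extendByZero_preimage_cornerSimplex (t : ℝ) :
    extendByZero I ⁻¹' cornerSimplex (Fin n) t = cornerSimplex I t := by
  ext y
  exact and_congr (extendByZero_nonneg_iff I) (by rw [sum_extendByZero])

lemma coordVol_preimage_div {d : Fin n → ℝ} (hd : ∀ i, d i ≠ 0) (X : Set (Fin n → ℝ)) :
    coordVol I ((fun x i => x i / d i) ⁻¹' X) = (∏ i ∈ I, |d i|) * coordVol I X := by
  have hpre : extendByZero I ⁻¹' ((fun x i => x i / d i) ⁻¹' X) =
      (fun (y : I → ℝ) j => y j / d j) ⁻¹' (extendByZero I ⁻¹' X) := by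
    ext y
    simp [extendByZero_div]
  rw [coordVol_eq_volume_preimage_extendByZero, hpre,
    volume_preimage_div (d := fun j : I => d j) fun j => hd j, ENNReal.toReal_mul,
    ENNReal.toReal_ofReal (by positivity), prod_coe_sort I fun i => |d i|]
  rfl

lemma coordVol_cornerSimplex {t : ℝ} (ht : 0 ≤ t) :
    coordVol I (cornerSimplex (Fin n) t) = t ^ I.card / I.card ! := by
  rw [coordVol_eq_volume_preimage_extendByZero, extendByZero_preimage_cornerSimplex,
    volume_cornerSimplex _ ht, Fintype.card_coe, ENNReal.toReal_ofReal (by positivity)]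

end ExtendByZero

lemma newtonNumberOn_eq_prod_sub_one {n : ℕ} {K : Finset (Fin n)} {X : Set (Fin n → ℝ)}
    (c : Fin n → ℝ) (hX : ∀ I ⊆ K, coordVol I X = (∏ i ∈ I, c i) / I.card !) :
    newtonNumberOn K X = ∏ i ∈ K, (c i - 1) := by
  have hterm : ∀ I ∈ K.powerset, (-1 : ℝ) ^ (K.card - I.card) * (I.card ! : ℝ) * coordVol I X =
      (∏ i ∈ I, c i) * ∏ _i ∈ K \ I, (-1 : ℝ) := by
    intro I hI
    rw [mem_powerset] at hI
    rw [hX I hI, prod_const, card_sdiff_of_subset hI]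
    field_simp
  simp_rw [sub_eq_add_neg, prod_add, newtonNumberOn]
  exact sum_congr rfl hterm

lemma convexHull_zero_single_eq_preimage {n : ℕ} {a : Fin n → ℝ} (ha : ∀ i, a i ≠ 0) :
    convexHull ℝ (insert (0 : Fin n → ℝ) (Set.range fun i => Pi.single i (a i))) =
      (fun x i => x i / a i) ⁻¹' cornerSimplex (Fin n) 1 := by
  apply subset_antisymm
  · refine convexHull_min (Set.insert_subset_iff.2 ⟨?_, Set.range_subset_iff.2 fun i => ?_⟩)
      (convex_cornerSimplex 1 |>.is_linear_preimage ?_)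
    · simp [cornerSimplex]
    · have hi : (fun j => (Pi.single i (a i) : Fin n → ℝ) j / a j) = Pi.single i 1 := by
        ext j
        by_cases h : j = i
        · subst h
          simp [ha j]
        · simp [h]
      rw [Set.mem_preimage, hi]
      exact ⟨fun j => by simp only [Pi.single_apply]; positivity, by simp⟩
    · exact ⟨fun x y => by ext; simp [add_div], fun c x => by ext; simp [mul_div_assoc]⟩
  · rintro x ⟨hx, hsum⟩
    have hx_eq : x = ∑ o : Option (Fin n),
        Option.elim o (1 - ∑ i, x i / a i) (fun i => x i / a i) •
          Option.elim o 0 (fun i => Pi.single i (a i)) := by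
      simp only [Fintype.sum_option, Option.elim, smul_zero, zero_add, ← Pi.single_smul',
        smul_eq_mul, div_mul_cancel₀ _ (ha _)]
      exact (LinearMap.sum_single_apply _ x).symm
    rw [hx_eq]
    refine (convex_convexHull ℝ _).sum_mem ?_ ?_ ?_
    · rintro (_ | i) -
      exacts [sub_nonneg.2 hsum, hx i]
    · simp [Fintype.sum_option]
    · rintro (_ | i) -
      exacts [subset_convexHull ℝ _ (Set.mem_insert _ _),
        subset_convexHull ℝ _ (Set.mem_insert_of_mem _ ⟨i, rfl⟩)]

theorem stmt7 (n : ℕ) (a : Fin n → ℝ) (ha : ∀ i, 1 ≤ a i) (b : ℝ) (hb : 1 ≤ b) :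
    newtonNumberOn Finset.univ
        (convexHull ℝ (insert (0 : Fin n → ℝ) (Set.range fun i => Pi.single i (a i)))) =
      ∏ i, (a i - 1) ∧
    newtonNumberOn Finset.univ {x : Fin n → ℝ | (∀ i, 0 ≤ x i) ∧ ∑ i, x i ≤ b} =
      (b - 1) ^ n := by
  have ha₀ : ∀ i, 0 < a i := fun i => zero_lt_one.trans_le (ha i)
  constructor
  · rw [convexHull_zero_single_eq_preimage fun i => (ha₀ i).ne']
    refine newtonNumberOn_eq_prod_sub_one a fun I _ => ?_
    rw [coordVol_preimage_div I fun i => (ha₀ i).ne', coordVol_cornerSimplex I zero_le_one,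
      prod_congr rfl fun i _ => abs_of_pos (ha₀ i)]
    simp [div_eq_mul_inv]
  · refine (newtonNumberOn_eq_prod_sub_one (fun _ => b) fun I _ => ?_).trans (Fin.prod_const n _)
    rw [prod_const]
    exact coordVol_cornerSimplex I (zero_le_one.trans hb)
end
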